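/- Fix block data n₁, …, n_l and the grading gr of strand diagrams as in the context. Let S, T ⊆ {1, …, N} and let ψ : S → T be a strictly increasing bijection with ψ(i) ≥ i and ψ(i) in the same block as i for every i ∈ S. For any U ⊆ {1, …, N} \ (S ∪ T), let ψ_U : S ∪ U → T ∪ U be the extension of ψ by the identity on U. Then (S ∪ U, T ∪ U, ψ_U) is a strand diagram, [ψ_U] = [ψ], and gr((S ∪ U, T ∪ U, ψ_U)) = (−m(S, [ψ]), [ψ]); in particular the grading is independent of the choice of U. Consequently, for a completable collection 𝛒 of Reeb chords, the associated element a(𝛒) = Σ_U (S ∪ U, T ∪ U, ψ_U) of the strands algebra is gr-homogeneous, and the grading of a(𝛒, s) does not depend on the completion s. -/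
import Mathlib


open Finset

attribute [local instance] Classical.propDecidable

noncomputable section

variable {l : ℕ}

/-- The total size of the first `r` blocks (`cum n l` is `N = n₁ + ⋯ + n_l`). -/
def cum (n : Fin l → ℕ) (r : ℕ) : ℕ :=
  ∑ s ∈ Finset.univ.filter (fun s : Fin l => (s : ℕ) < r), n s

/-- The 1-indexed block number of a point `i ∈ {1, …, N}`: consecutive blocks
`B₁, …, B_l` of sizes `n₁, …, n_l` partition `{1, …, N}`. -/
def blockOf (n : Fin l → ℕ) (i : ℕ) : ℕ :=
  ((Finset.range l).filter (fun r => cum n r < i)).card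

/-- A strand diagram for the block data `n₁, …, n_l`: a triple `(S, T, φ)` with
`S, T ⊆ {1, …, N}` and `φ : S → T` a bijection such that `φ(i) ≥ i` and `φ(i)` is
in the same block as `i`, for every `i ∈ S`.  The function `str` represents `φ`,
normalized to be the identity outside `S`. -/
structure StrandDiagram (n : Fin l → ℕ) where
  S : Finset ℕ
  T : Finset ℕ
  str : ℕ → ℕ
  S_sub : S ⊆ Finset.Icc 1 (cum n l)
  T_sub : T ⊆ Finset.Icc 1 (cum n l)
  bij : Set.BijOn str ↑S ↑T
  le_str : ∀ i ∈ S, i ≤ str i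
  block : ∀ i ∈ S, blockOf n (str i) = blockOf n i
  out : ∀ i ∉ S, str i = i

/-- The homology class `[φ] : {1, …, N−1} → ℤ`, `[φ](p) = #{i ∈ S : i ≤ p < φ(i)}`. -/
def hcl (S : Finset ℕ) (f : ℕ → ℕ) (p : ℕ) : ℤ :=
  ((S.filter fun i => i ≤ p ∧ p < f i).card : ℤ)

/-- `p ∈ {1, …, N−1}` is interior if `p` and `p+1` lie in the same block. -/
def Interior (n : Fin l → ℕ) (p : ℕ) : Prop :=
  1 ≤ p ∧ p + 1 ≤ cum n l ∧ blockOf n p = blockOf n (p + 1)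

/-- `h⁻(x) = h(x−1)` if `x−1` is interior, else `0`. -/
def hminus (n : Fin l → ℕ) (h : ℕ → ℤ) (x : ℕ) : ℤ :=
  if Interior n (x - 1) then h (x - 1) else 0

/-- `h⁺(x) = h(x)` if `x` is interior, else `0`. -/
def hplus (n : Fin l → ℕ) (h : ℕ → ℤ) (x : ℕ) : ℤ :=
  if Interior n x then h x else 0

/-- `m(X, h) = Σ_{x ∈ X} (h⁻(x) + h⁺(x))/2 ∈ ℚ`. -/
def mQ (n : Fin l → ℕ) (X : Finset ℕ) (h : ℕ → ℤ) : ℚ :=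
  ∑ x ∈ X, ((hminus n h x : ℚ) + (hplus n h x : ℚ)) / 2

/-- `L(h, h′) = Σ_{q=1}^{N} (h⁻(q) − h⁺(q))·(h′⁻(q) + h′⁺(q))/2 ∈ ℚ`. -/
def LQ (n : Fin l → ℕ) (h h' : ℕ → ℤ) : ℚ :=
  ∑ q ∈ Finset.Icc 1 (cum n l),
    ((hminus n h q : ℚ) - (hplus n h q : ℚ)) * ((hminus n h' q : ℚ) + (hplus n h' q : ℚ)) / 2

/-- The number of inversions `inv(φ) = #{(i,j) ∈ S × S : i < j, φ(i) > φ(j)}`. -/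
def invCount (S : Finset ℕ) (f : ℕ → ℕ) : ℕ :=
  ((S ×ˢ S).filter fun p => p.1 < p.2 ∧ f p.2 < f p.1).card

/-- `ι(φ) = inv(φ) − m(S, [φ])`. -/
def iota (n : Fin l → ℕ) (S : Finset ℕ) (f : ℕ → ℕ) : ℚ :=
  (invCount S f : ℚ) - mQ n S (hcl S f)

/-- The grading `gr(S, T, φ) = (ι(φ), [φ]) ∈ Gr`. -/
def grD (n : Fin l → ℕ) (S : Finset ℕ) (f : ℕ → ℕ) : ℚ × (ℕ → ℤ) :=
  (iota n S f, hcl S f)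

/-- The multiplication of the grading group `Gr`:
`(a₁, h₁)·(a₂, h₂) = (a₁ + a₂ + L(h₁, h₂), h₁ + h₂)`. -/
def grMul (n : Fin l → ℕ) (x y : ℚ × (ℕ → ℤ)) : ℚ × (ℕ → ℤ) :=
  (x.1 + y.1 + LQ n x.2 y.2, fun p => x.2 p + y.2 p)

/-- The resolution of the inversion `(i, j)`: swap the values of `φ` at `i` and `j`. -/
def resolve (f : ℕ → ℕ) (i j : ℕ) (x : ℕ) : ℕ :=
  if x = i then f j else if x = j then f i else f x

end

section Aux

variable {l : ℕ}

lemma blockOf_mono (n : Fin l → ℕ) {i j : ℕ} (hij : i ≤ j) :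
    blockOf n i ≤ blockOf n j :=
  Finset.card_le_card (fun r hr => by
    simp only [Finset.mem_filter] at hr ⊢
    exact ⟨hr.1, lt_of_lt_of_le hr.2 hij⟩)

lemma blockOf_between (n : Fin l → ℕ) {i x j : ℕ} (h1 : i ≤ x) (h2 : x ≤ j)
    (h : blockOf n j = blockOf n i) : blockOf n x = blockOf n i :=
  le_antisymm (h ▸ blockOf_mono n h2) (blockOf_mono n h1)

lemma interior_of_strand (n : Fin l → ℕ) {i fi p : ℕ}
    (hi1 : 1 ≤ i) (hfN : fi ≤ cum n l) (hb : blockOf n fi = blockOf n i)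
    (hip : i ≤ p) (hpf : p < fi) : Interior n p := by
  have h1 : blockOf n p = blockOf n i := blockOf_between n hip hpf.le hb
  have h2 : blockOf n (p + 1) = blockOf n i := blockOf_between n (by omega) hpf hb
  exact ⟨le_trans hi1 hip, by omega, h1.trans h2.symm⟩

lemma hcl_eq_zero_aux (n : Fin l → ℕ) {S T : Finset ℕ} {f : ℕ → ℕ}
    (hS : S ⊆ Finset.Icc 1 (cum n l)) (hT : T ⊆ Finset.Icc 1 (cum n l))
    (hmaps : Set.MapsTo f ↑S ↑T)
    (hblk : ∀ i ∈ S, blockOf n (f i) = blockOf n i)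
    {p : ℕ} (hp : ¬ Interior n p) : hcl S f p = 0 := by
  unfold hcl
  rw [Finset.filter_eq_empty_iff.mpr ?_]
  · simp
  · intro i hi
    rintro ⟨hip, hpf⟩
    have hi1 : 1 ≤ i := (Finset.mem_Icc.mp (hS hi)).1
    have hfN : f i ≤ cum n l := (Finset.mem_Icc.mp (hT (hmaps hi))).2
    exact hp (interior_of_strand n hi1 hfN (hblk i hi) hip hpf)

lemma hcl_shift_aux {S T : Finset ℕ} {f : ℕ → ℕ}
    (hmaps : Set.MapsTo f ↑S ↑T)
    {x : ℕ} (hx1 : 1 ≤ x) (hxS : x ∉ S) (hxT : x ∉ T) :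
    hcl S f (x - 1) = hcl S f x := by
  unfold hcl
  congr 2
  apply Finset.filter_congr
  intro i hi
  have h1 : f i ≠ x := fun h => hxT (h ▸ hmaps hi)
  have h2 : i ≠ x := fun h => hxS (h ▸ hi)
  constructor <;> rintro ⟨a, b⟩ <;> omega

end Aux

/-- let `ψ : S → T` be a strictly increasing bijection with `ψ(i) ≥ i` and
`ψ(i)` in the same block as `i` for every `i ∈ S`, and let `U ⊆ {1, …, N} \ (S ∪ T)`.
Then the extension `ψ_U` of `ψ` by the identity on `U` gives a strand diagram
`(S ∪ U, T ∪ U, ψ_U)`, with `[ψ_U] = [ψ]` and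
`gr((S ∪ U, T ∪ U, ψ_U)) = (−m(S, [ψ]), [ψ])`; in particular the grading is independent
of `U`.  Consequently the element `a(𝛒)` associated to a completable collection of Reeb
chords is `gr`-homogeneous, and the grading of `a(𝛒, s)` does not depend on the
completion `s`. -/
theorem gr_of_completion_independent (l : ℕ) (n : Fin l → ℕ)
    (S T U : Finset ℕ) (f : ℕ → ℕ)
    (hS : S ⊆ Finset.Icc 1 (cum n l)) (hT : T ⊆ Finset.Icc 1 (cum n l))
    (hU : U ⊆ Finset.Icc 1 (cum n l))
    (hdisj : Disjoint U (S ∪ T))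
    (hbij : Set.BijOn f ↑S ↑T) (hmono : StrictMonoOn f ↑S)
    (hle : ∀ i ∈ S, i ≤ f i)
    (hblk : ∀ i ∈ S, blockOf n (f i) = blockOf n i) :
    (∃ D : StrandDiagram n, D.S = S ∪ U ∧ D.T = T ∪ U ∧
      D.str = fun x => if x ∈ S then f x else x) ∧
    (∀ p : ℕ, hcl (S ∪ U) (fun x => if x ∈ S then f x else x) p = hcl S f p) ∧
    grD n (S ∪ U) (fun x => if x ∈ S then f x else x) =
      (-(mQ n S (hcl S f)), hcl S f) := by
  set g : ℕ → ℕ := fun x => if x ∈ S then f x else x with hg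
  have hUS : Disjoint U S := Finset.disjoint_union_right.mp hdisj |>.1
  have hUT : Disjoint U T := Finset.disjoint_union_right.mp hdisj |>.2
  have hgS : ∀ i ∈ S, g i = f i := fun i hi => if_pos hi
  have hgU : ∀ i ∈ U, g i = i := fun i hi => if_neg (Finset.disjoint_left.mp hUS hi)
  have hU1 : ∀ x ∈ U, 1 ≤ x ∧ x ≤ cum n l := fun x hx => Finset.mem_Icc.mp (hU hx)
  -- part 2 : homology class equality
  have part2 : ∀ p : ℕ, hcl (S ∪ U) g p = hcl S f p := by
    intro p
    unfold hcl
    congr 2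
    rw [Finset.filter_union]
    have h1 : U.filter (fun i => i ≤ p ∧ p < g i) = ∅ := by
      apply Finset.filter_eq_empty_iff.mpr
      intro i hi
      rw [hgU i hi]
      omega
    have h2 : S.filter (fun i => i ≤ p ∧ p < g i) =
        S.filter (fun i => i ≤ p ∧ p < f i) := by
      apply Finset.filter_congr
      intro i hi
      rw [hgS i hi]
    rw [h1, h2, Finset.union_empty]
  -- strand diagram
  have hbijg : Set.BijOn g ↑(S ∪ U) ↑(T ∪ U) := by
    constructor
    · intro i hi
      simp only [Finset.coe_union, Set.mem_union] at hi ⊢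
      rcases hi with hi | hi
      · exact Or.inl (by rw [hgS i hi]; exact hbij.mapsTo hi)
      · exact Or.inr (by rw [hgU i hi]; exact hi)
    constructor
    · intro i hi j hj hij
      simp only [Finset.coe_union, Set.mem_union] at hi hj
      rcases hi with hi | hi <;> rcases hj with hj | hj
      · exact hbij.injOn hi hj (by rwa [hgS i hi, hgS j hj] at hij)
      · rw [hgS i hi, hgU j hj] at hij
        have hjT : j ∈ T := hij ▸ hbij.mapsTo hi
        exact absurd hjT (Finset.disjoint_left.mp hUT hj)
      · rw [hgU i hi, hgS j hj] at hij
        have hiT : i ∈ T := hij.symm ▸ hbij.mapsTo hj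
        exact absurd hiT (Finset.disjoint_left.mp hUT hi)
      · rwa [hgU i hi, hgU j hj] at hij
    · intro t ht
      simp only [Finset.coe_union, Set.mem_union, Set.mem_image] at ht ⊢
      rcases ht with ht | ht
      · obtain ⟨i, hi, hfi⟩ := hbij.surjOn ht
        exact ⟨i, Or.inl hi, by rw [hgS i hi]; exact hfi⟩
      · exact ⟨t, Or.inr ht, hgU t ht⟩
  have hD : ∃ D : StrandDiagram n, D.S = S ∪ U ∧ D.T = T ∪ U ∧ D.str = g := by
    refine ⟨⟨S ∪ U, T ∪ U, g, ?_, ?_, hbijg, ?_, ?_, ?_⟩, rfl, rfl, rfl⟩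
    · exact Finset.union_subset hS hU
    · exact Finset.union_subset hT hU
    · intro i hi
      rcases Finset.mem_union.mp hi with hi | hi
      · rw [hgS i hi]; exact hle i hi
      · rw [hgU i hi]
    · intro i hi
      rcases Finset.mem_union.mp hi with hi | hi
      · rw [hgS i hi]; exact hblk i hi
      · rw [hgU i hi]
    · intro i hi
      exact if_neg (fun h => hi (Finset.mem_union_left U h))
  refine ⟨hD, part2, ?_⟩
  -- grading
  have hhcl : hcl (S ∪ U) g = hcl S f := funext part2
  have hmapsf : Set.MapsTo f ↑S ↑T := hbij.mapsTo
  -- value of h on U indices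
  have hUval : ∀ x ∈ U, ((hminus n (hcl S f) x : ℚ) + (hplus n (hcl S f) x : ℚ)) / 2
      = ((hcl S f x : ℚ)) := by
    intro x hx
    obtain ⟨hx1, hxN⟩ := hU1 x hx
    have hxS : x ∉ S := Finset.disjoint_left.mp hUS hx
    have hxT : x ∉ T := Finset.disjoint_left.mp hUT hx
    have hshift : hcl S f (x - 1) = hcl S f x := hcl_shift_aux hmapsf hx1 hxS hxT
    have hm : hminus n (hcl S f) x = hcl S f x := by
      unfold hminus
      split_ifs with h
      · exact hshift
      · rw [← hshift, hcl_eq_zero_aux n hS hT hmapsf hblk h]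
    have hp : hplus n (hcl S f) x = hcl S f x := by
      unfold hplus
      split_ifs with h
      · rfl
      · rw [hcl_eq_zero_aux n hS hT hmapsf hblk h]
    rw [hm, hp]
    ring
  have hmU : mQ n U (hcl S f) = ∑ x ∈ U, ((hcl S f x : ℚ)) := by
    unfold mQ
    exact Finset.sum_congr rfl hUval
  -- inversion count
  have hinv : (invCount (S ∪ U) g : ℚ) = ∑ x ∈ U, ((hcl S f x : ℚ)) := by
    have step : invCount (S ∪ U) g =
        ∑ j ∈ U, (S.filter (fun i => i ≤ j ∧ j < f i)).card := by
      unfold invCount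
      rw [Finset.card_filter, Finset.sum_product, Finset.sum_union (hUS.symm)]
      have hz1 : ∀ i ∈ U, (∑ j ∈ S ∪ U, if i < j ∧ g j < g i then 1 else 0) = 0 := by
        intro i hi
        apply Finset.sum_eq_zero
        intro j hj
        rw [if_neg]
        rintro ⟨hij, hji⟩
        rw [hgU i hi] at hji
        rcases Finset.mem_union.mp hj with hj | hj
        · rw [hgS j hj] at hji
          exact absurd (lt_of_le_of_lt (hle j hj) hji) (by omega)
        · rw [hgU j hj] at hji; omega
      rw [Finset.sum_eq_zero hz1, add_zero]
      have hsplit : ∀ i ∈ S, (∑ j ∈ S ∪ U, if i < j ∧ g j < g i then 1 else 0) =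
          ∑ j ∈ U, if i < j ∧ j < f i then 1 else 0 := by
        intro i hi
        rw [Finset.sum_union (hUS.symm)]
        have hz2 : (∑ j ∈ S, if i < j ∧ g j < g i then 1 else 0) = 0 := by
          apply Finset.sum_eq_zero
          intro j hj
          rw [if_neg]
          rintro ⟨hij, hji⟩
          rw [hgS i hi, hgS j hj] at hji
          exact absurd (hmono hi hj hij) (by omega)
        rw [hz2, zero_add]
        apply Finset.sum_congr rfl
        intro j hj
        rw [hgS i hi, hgU j hj]
      rw [Finset.sum_congr rfl hsplit, Finset.sum_comm]
      apply Finset.sum_congr rfl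
      intro j hj
      rw [Finset.card_filter]
      apply Finset.sum_congr rfl
      intro i hi
      congr 1
      have h2 : i ≠ j := fun h => (Finset.disjoint_left.mp hUS hj) (h ▸ hi)
      have h3 : f i ≠ j := fun h => (Finset.disjoint_left.mp hUT hj) (h ▸ hmapsf hi)
      simp only [eq_iff_iff]
      constructor <;> rintro ⟨a, b⟩ <;> constructor <;> omega
    rw [step]
    push_cast
    apply Finset.sum_congr rfl
    intro j hj
    unfold hcl
    push_cast
    rfl
  -- conclude
  unfold grD
  rw [hhcl]
  refine Prod.ext ?_ rfl
  show iota n (S ∪ U) g = -(mQ n S (hcl S f))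
  unfold iota
  rw [hhcl, hinv]
  have hmsplit : mQ n (S ∪ U) (hcl S f) = mQ n S (hcl S f) + mQ n U (hcl S f) :=
    Finset.sum_union hUS.symm
  rw [hmsplit, hmU]
  ring
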